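/- Let C be a convex polygon contained in [0,1]² and let C' be a convex polygon obtained from C by translating each of its r supporting halfplanes outward by at most δ ∈ [0,1] (i.e., C = ∩ᵢ Hᵢ, C' = ∩ᵢ Hᵢ' with Hᵢ ⊆ Hᵢ' parallel and dist(∂Hᵢ,∂Hᵢ') ≤ δ). Then the area of (C' ∩ [0,1]²) \ C is at most K·δ for an absolute constant K (independent of r). -/

import Mathlib

open MeasureTheory Set

/-!
A point of `(C' ∩ [0,1]²) \ C` violates some constraint `⟪x, vᵢ⟫ ≤ tᵢ`. One coordinate of the
unit normal `vᵢ` has absolute value at least `1/2`, so moving `x` by `±2δ` along that coordinate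
raises `⟪x, vᵢ⟫` by at least `δ` and leaves the convex set `M = C' ∩ [0,1]²`. Hence the region
lies in the union of the four sets `{x ∈ M | x + w ∉ M}` with `w = ±2δ e₀, ±2δ e₁`. By Fubini each
of them has area at most `2δ`: on every line parallel to `w` the section of `M` is an interval,
and the points of an interval whose translate by `h` leaves it form a set of diameter at most `|h|`.
-/

def exitSet {E : Type*} [Add E] (A : Set E) (w : E) : Set E := A \ (· + w) ⁻¹' A

theorem Convex.preimage_prodMk {𝕜 E F : Type*} [Semiring 𝕜] [PartialOrder 𝕜] [AddCommMonoid E]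
    [AddCommMonoid F] [Module 𝕜 E] [Module 𝕜 F] {A : Set (E × F)} (hc : Convex 𝕜 A) (x : E) :
    Convex 𝕜 (Prod.mk x ⁻¹' A) := by
  intro a ha b hb μ ν hμ hν hμν
  have := hc ha hb hμ hν hμν
  rwa [Prod.smul_mk, Prod.smul_mk, Prod.mk_add_mk, Convex.combo_self hμν] at this

theorem Set.OrdConnected.volume_exitSet_le {I : Set ℝ} (hI : I.OrdConnected) (h : ℝ) :
    volume (exitSet I h) ≤ ENNReal.ofReal |h| := by
  -- if `u < u'` were more than `|h|` apart, `u + h` or `u' + h` would lie between them, in `I`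
  have gap : ∀ u ∈ exitSet I h, ∀ u' ∈ exitSet I h, u' - u ≤ |h| := by
    rintro u ⟨hu, hu_out⟩ u' ⟨hu', hu'_out⟩
    by_contra! hlt
    rcases le_total 0 h with hh | hh
    · exact hu_out (hI.out hu hu' ⟨by linarith, by linarith [abs_of_nonneg hh]⟩)
    · exact hu'_out (hI.out hu hu' ⟨by linarith [abs_of_nonpos hh], by linarith⟩)
  calc volume (exitSet I h) ≤ Metric.ediam (exitSet I h) := Real.volume_le_diam _
    _ ≤ ENNReal.ofReal |h| := Metric.ediam_le fun u hu u' hu' => by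
      rw [edist_dist, Real.dist_eq]
      exact ENNReal.ofReal_le_ofReal (abs_sub_le_iff.2 ⟨gap u' hu' u hu, gap u hu u' hu'⟩)

theorem MeasurableSet.exitSet {E : Type*} [MeasurableSpace E] [Add E] [MeasurableAdd E] {A : Set E}
    (hA : MeasurableSet A) (w : E) : MeasurableSet (exitSet A w) :=
  hA.diff (hA.preimage (measurable_add_const w))

theorem Convex.volume_exitSet_vertical_le {A : Set (ℝ × ℝ)} (hA : MeasurableSet A)
    (hc : Convex ℝ A) {s : Set ℝ} (hs : A ⊆ s ×ˢ univ) (h : ℝ) :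
    volume (exitSet A (0, h)) ≤ ENNReal.ofReal |h| * volume s := by
  have fiber_le : ∀ x, volume (Prod.mk x ⁻¹' exitSet A (0, h)) ≤
      s.indicator (fun _ => ENNReal.ofReal |h|) x := by
    intro x
    have fiber : Prod.mk x ⁻¹' exitSet A (0, h) = exitSet (Prod.mk x ⁻¹' A) h := by
      ext u; simp [exitSet]
    by_cases hx : x ∈ s
    · rw [indicator_of_mem hx, fiber]
      exact (hc.preimage_prodMk x).ordConnected.volume_exitSet_le h
    · have : Prod.mk x ⁻¹' exitSet A (0, h) = ∅ :=
        eq_empty_of_forall_notMem fun u hu => hx (hs hu.1).1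
      simp [this]
  rw [Measure.volume_eq_prod, Measure.prod_apply (hA.exitSet _)]
  exact (lintegral_mono fiber_le).trans (lintegral_indicator_const_le _ _)

theorem ContinuousLinearEquiv.measure_exitSet_eq {E F : Type*} [NormedAddCommGroup E]
    [NormedSpace ℝ E] [MeasurableSpace E] [BorelSpace E] [NormedAddCommGroup F] [NormedSpace ℝ F]
    [MeasurableSpace F] [BorelSpace F] {μ : Measure E} {ν : Measure F} (L : E ≃L[ℝ] F)
    (hL : MeasurePreserving L μ ν) (A : Set E) (w : E) :
    μ (exitSet A w) = ν (exitSet (L '' A) (L w)) := by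
  rw [← MeasurePreserving.measure_preimage_equiv (f := L.toHomeomorph.toMeasurableEquiv) hL]
  congr 1
  ext x
  change x ∈ A ∧ x + w ∉ A ↔ L x ∈ L '' A ∧ L x + L w ∉ L '' A
  rw [← map_add, L.injective.mem_set_image, L.injective.mem_set_image]

theorem Convex.volume_exitSet_horizontal_le {A : Set (ℝ × ℝ)} (hA : MeasurableSet A)
    (hc : Convex ℝ A) {s : Set ℝ} (hs : A ⊆ univ ×ˢ s) (h : ℝ) :
    volume (exitSet A (h, 0)) ≤ ENNReal.ofReal |h| * volume s := by
  let L := ContinuousLinearEquiv.prodComm ℝ ℝ ℝ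
  have hL : MeasurePreserving L volume volume := by
    rw [Measure.volume_eq_prod]
    exact Measure.measurePreserving_swap
  rw [L.measure_exitSet_eq hL]
  refine Convex.volume_exitSet_vertical_le ?_ (hc.linear_image L.toLinearMap) ?_ h
  · exact L.toHomeomorph.toMeasurableEquiv.measurableSet_image.2 hA
  · rintro _ ⟨p, hp, rfl⟩
    exact ⟨(hs hp).2, trivial⟩

theorem convex_iInter_setOf_inner_le {ι E : Type*} [NormedAddCommGroup E] [InnerProductSpace ℝ E]
    (v : ι → E) (t : ι → ℝ) : Convex ℝ (⋂ i, {x : E | inner ℝ x (v i) ≤ t i}) :=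
  convex_iInter fun i =>
    convex_halfSpace_le
      ⟨fun x y => inner_add_left x y (v i), fun c x => real_inner_smul_left x (v i) c⟩ _

theorem isClosed_iInter_setOf_inner_le {ι E : Type*} [NormedAddCommGroup E] [InnerProductSpace ℝ E]
    (v : ι → E) (t : ι → ℝ) : IsClosed (⋂ i, {x : E | inner ℝ x (v i) ≤ t i}) :=
  isClosed_iInter fun i => isClosed_le (by fun_prop) continuous_const

theorem EuclideanSpace.convex_setOf_forall_apply_mem {ι : Type*} {s : ι → Set ℝ}
    (hs : ∀ j, Convex ℝ (s j)) : Convex ℝ {x : EuclideanSpace ℝ ι | ∀ j, x j ∈ s j} := by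
  simp only [ofPred_forall]
  exact convex_iInter fun j => (hs j).is_linear_preimage (EuclideanSpace.proj j).isLinear

theorem EuclideanSpace.isClosed_setOf_forall_apply_mem {ι : Type*} {s : ι → Set ℝ}
    (hs : ∀ j, IsClosed (s j)) : IsClosed {x : EuclideanSpace ℝ ι | ∀ j, x j ∈ s j} := by
  simp only [ofPred_forall]
  exact isClosed_iInter fun j => (hs j).preimage (by fun_prop)

theorem EuclideanSpace.exists_half_le_abs_apply {v : EuclideanSpace ℝ (Fin 2)} (hv : ‖v‖ = 1) :
    ∃ j, 1 / 2 ≤ |v j| := by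
  have hsq : v 0 ^ 2 + v 1 ^ 2 = 1 := by
    simpa [hv, Fin.sum_univ_two] using (EuclideanSpace.real_norm_sq_eq v).symm
  by_contra! hsmall
  nlinarith [abs_lt.1 (hsmall 0), abs_lt.1 (hsmall 1)]

theorem Convex.volume_exitSet_single_le {A : Set (EuclideanSpace ℝ (Fin 2))}
    (hA : MeasurableSet A) (hc : Convex ℝ A) (hsub : A ⊆ {x | ∀ j, x j ∈ Icc (0 : ℝ) 1})
    (j : Fin 2) (a : ℝ) : volume (exitSet A (EuclideanSpace.single j a)) ≤ ENNReal.ofReal |a| := by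
  let L := (EuclideanSpace.equiv (Fin 2) ℝ).trans (ContinuousLinearEquiv.finTwoArrow ℝ ℝ)
  have hL : MeasurePreserving L volume volume :=
    (volume_preserving_finTwoArrow ℝ).comp (PiLp.volume_preserving_ofLp _)
  have hLA : MeasurableSet (L '' A) := L.toHomeomorph.toMeasurableEquiv.measurableSet_image.2 hA
  have hLsub : L '' A ⊆ Icc 0 1 ×ˢ Icc 0 1 := by
    rintro _ ⟨x, hx, rfl⟩
    exact ⟨hsub hx 0, hsub hx 1⟩
  rw [L.measure_exitSet_eq hL]
  fin_cases j
  · simpa [L, Real.volume_Icc] using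
      (hc.linear_image L.toLinearMap).volume_exitSet_horizontal_le hLA
        (hLsub.trans (prod_mono_left (subset_univ _))) a
  · simpa [L, Real.volume_Icc] using
      (hc.linear_image L.toLinearMap).volume_exitSet_vertical_le hLA
        (hLsub.trans (prod_mono_right (subset_univ _))) a

theorem Convex.volume_iUnion_exitSet_single_le {A : Set (EuclideanSpace ℝ (Fin 2))}
    (hA : MeasurableSet A) (hc : Convex ℝ A) (hsub : A ⊆ {x | ∀ j, x j ∈ Icc (0 : ℝ) 1})
    (a : ℝ) :
    volume (⋃ j, exitSet A (EuclideanSpace.single j a) ∪ exitSet A (EuclideanSpace.single j (-a)))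
      ≤ ENNReal.ofReal (4 * |a|) :=
  calc _ ≤ ∑ j : Fin 2, volume (exitSet A (EuclideanSpace.single j a) ∪
          exitSet A (EuclideanSpace.single j (-a))) := measure_iUnion_fintype_le _ _
    _ ≤ ∑ _ : Fin 2, (ENNReal.ofReal |a| + ENNReal.ofReal |a|) :=
        Finset.sum_le_sum fun j _ => (measure_union_le _ _).trans <| add_le_add
          (hc.volume_exitSet_single_le hA hsub j a)
          ((hc.volume_exitSet_single_le hA hsub j (-a)).trans_eq (by rw [abs_neg]))
    _ = ENNReal.ofReal (4 * |a|) := by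
        rw [ENNReal.ofReal_mul (by norm_num)]
        simp only [Finset.sum_const, Finset.card_univ, Fintype.card_fin, nsmul_eq_mul,
          Nat.cast_ofNat, ENNReal.ofReal_ofNat]
        ring

theorem mem_iUnion_exitSet_single {M : Set (EuclideanSpace ℝ (Fin 2))}
    {v x : EuclideanSpace ℝ (Fin 2)} {t δ : ℝ} (hv : ‖v‖ = 1) (hδ : 0 ≤ δ) (hx : x ∈ M)
    (hxv : t < inner ℝ x v) (hM : ∀ y ∈ M, inner ℝ y v ≤ t + δ) :
    x ∈ ⋃ j, exitSet M (EuclideanSpace.single j (2 * δ)) ∪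
      exitSet M (EuclideanSpace.single j (-(2 * δ))) := by
  obtain ⟨j, hj⟩ := EuclideanSpace.exists_half_le_abs_apply hv
  have exits : ∀ c, δ ≤ c * v j → x ∈ exitSet M (EuclideanSpace.single j c) := by
    refine fun c hc => ⟨hx, fun hy => ?_⟩
    have := hM _ hy
    rw [inner_add_left, EuclideanSpace.inner_single_left] at this
    simp only [conj_trivial] at this
    linarith
  refine mem_iUnion.2 ⟨j, ?_⟩
  rcases le_total 0 (v j) with hvj | hvj
  · exact Or.inl (exits _ (by nlinarith [abs_of_nonneg hvj]))
  · exact Or.inr (exits _ (by nlinarith [abs_of_nonpos hvj]))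

/-- Translating each supporting halfplane of a convex polygon `C ⊆ [0,1]²` outward by at most
`δ ∈ [0,1]` increases the region inside the unit square by area at most `K·δ`, for an absolute
constant `K` independent of the number of halfplanes. -/
theorem stmt13 :
    ∃ K : ℝ, 0 < K ∧
      ∀ (r : ℕ) (δ : ℝ), δ ∈ Set.Icc (0:ℝ) 1 →
        ∀ (v : Fin r → EuclideanSpace ℝ (Fin 2)), (∀ i, ‖v i‖ = 1) →
        ∀ (t t' : Fin r → ℝ), (∀ i, t i ≤ t' i) → (∀ i, t' i ≤ t i + δ) →
        (⋂ i, {x : EuclideanSpace ℝ (Fin 2) | (inner ℝ x (v i) : ℝ) ≤ t i}) ⊆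
          {x : EuclideanSpace ℝ (Fin 2) | ∀ j, x j ∈ Set.Icc (0:ℝ) 1} →
        volume (((⋂ i, {x : EuclideanSpace ℝ (Fin 2) | (inner ℝ x (v i) : ℝ) ≤ t' i}) ∩
            {x : EuclideanSpace ℝ (Fin 2) | ∀ j, x j ∈ Set.Icc (0:ℝ) 1}) \
          (⋂ i, {x : EuclideanSpace ℝ (Fin 2) | (inner ℝ x (v i) : ℝ) ≤ t i}))
          ≤ ENNReal.ofReal (K * δ) := by
  refine ⟨8, by norm_num, fun r δ ⟨hδ, _⟩ v hv t t' _ ht' _ => ?_⟩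
  set M := (⋂ i, {x : EuclideanSpace ℝ (Fin 2) | inner ℝ x (v i) ≤ t' i}) ∩
    {x : EuclideanSpace ℝ (Fin 2) | ∀ j, x j ∈ Icc (0 : ℝ) 1}
  have hM : MeasurableSet M := ((isClosed_iInter_setOf_inner_le v t').inter
    (EuclideanSpace.isClosed_setOf_forall_apply_mem fun _ => isClosed_Icc)).measurableSet
  have hc : Convex ℝ M := (convex_iInter_setOf_inner_le v t').inter
    (EuclideanSpace.convex_setOf_forall_apply_mem fun _ => convex_Icc 0 1)
  have hsub : M \ ⋂ i, {x | inner ℝ x (v i) ≤ t i} ⊆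
      ⋃ j, exitSet M (EuclideanSpace.single j (2 * δ)) ∪
        exitSet M (EuclideanSpace.single j (-(2 * δ))) := by
    rintro x ⟨hxM, hxC⟩
    obtain ⟨i, hi⟩ : ∃ i, t i < inner ℝ x (v i) := by simpa using hxC
    exact mem_iUnion_exitSet_single (hv i) hδ hxM hi fun y hy => (mem_iInter.1 hy.1 i).trans (ht' i)
  calc volume (M \ _) ≤ _ := measure_mono hsub
    _ ≤ ENNReal.ofReal (4 * |2 * δ|) := hc.volume_iUnion_exitSet_single_le hM inter_subset_right _
    _ = ENNReal.ofReal (8 * δ) := by rw [abs_of_nonneg (by positivity)]; ring_nf
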